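/- The CB-interpolating polynomial indexed by an integer partition λ, defined by so^{(2n+1)}_λ(x; β) := Σ_{ε ∈ {0,1}^n} β^{|ε|} sp^{(2n)}_{λ-ε}(x) (with sp^{(2n)}_μ := 0 when μ is not a partition), specializes at β = 0 to the symplectic character sp^{(2n)}_λ(x) and at β = 1 to the odd orthogonal character so^{(2n+1)}_λ(x); in particular so^{(2n+1)}_λ(x) = Σ_{ε∈{0,1}^n} sp^{(2n)}_{λ-ε}(x). -/

import Mathlib

open scoped Classical

/-- The symplectic character `sp^{(2n)}_μ(x)` of an integer vector `μ`, by its Weyl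
character formula when `μ` is a partition, and `0` otherwise (0-based: the 1-based
exponent `μ_i + n - i + 1` is `μ i + n - i`). -/
noncomputable def spCharZ (n : ℕ) (μ : Fin n → ℤ) (x : Fin n → ℝ) : ℝ :=
  if (∀ i j : Fin n, i ≤ j → μ j ≤ μ i) ∧ (∀ i, 0 ≤ μ i) then
    (Matrix.of fun i j : Fin n =>
        x j ^ (μ i + n - (i : ℕ)) - x j ^ (-(μ i + n - (i : ℕ)))).det /
    (Matrix.of fun i j : Fin n =>
        x j ^ ((n : ℤ) - (i : ℕ)) - x j ^ (-((n : ℤ) - (i : ℕ)))).det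
  else 0

/-- The CB-interpolating polynomial
`so^{(2n+1)}_λ(x; β) := Σ_{ε ∈ {0,1}^n} β^{|ε|} sp^{(2n)}_{λ-ε}(x)`. -/
noncomputable def cbPoly (n : ℕ) (lam : Fin n → ℕ) (x : Fin n → ℝ) (β : ℝ) : ℝ :=
  ∑ ε : Fin n → Bool,
    β ^ (Finset.univ.filter (fun i => ε i = true)).card *
      spCharZ n (fun i => (lam i : ℤ) - if ε i then 1 else 0) x

/-- The odd orthogonal character `so^{(2n+1)}_λ(x)` of an integer partition `λ`, by
its Weyl character formula (0-based: the 1-based exponent `λ_i + n - i + 1/2` is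
`λ i + n - i - 1/2`, a genuine half-integer, whence real powers of positive reals). -/
noncomputable def soOdd (n : ℕ) (lam : Fin n → ℕ) (x : Fin n → ℝ) : ℝ :=
  (Matrix.of fun i j : Fin n =>
      x j ^ ((lam i : ℝ) + n - (i : ℕ) - 1 / 2)
        - x j ^ (-((lam i : ℝ) + n - (i : ℕ) - 1 / 2))).det /
  (Matrix.of fun i j : Fin n =>
      x j ^ ((n : ℝ) - (i : ℕ) - 1 / 2) - x j ^ (-((n : ℝ) - (i : ℕ) - 1 / 2))).det

/-! Multiply column `j` of both Weyl determinants of `so^{(2n+1)}_λ` by `x_j^{1/2} + x_j^{-1/2}`.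
This turns each row `x^a - x^{-a}`, with `a` a half-integer, into the sum of the integral rows with
exponents `a + 1/2` and `a - 1/2`, and row-multilinearity expands the numerator into
`Σ_ε det (x_j^{(λ-ε)_i+n-i+1} - x_j^{-((λ-ε)_i+n-i+1)})`. As `λ` is a partition, every term whose
`λ - ε` is not one has two equal rows or a zero row, so it is the `0` of the convention
`sp_{λ-ε} := 0`. The case `λ = 0` identifies the two denominators, and the quotient gives the
identity at `β = 1`; at `β = 0` only `ε = 0` survives. -/

open Matrix

theorem Matrix.det_add_eq_sum_bool {ι R : Type*} [Fintype ι] [DecidableEq ι] [CommRing R]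
    (A B : Matrix ι ι R) :
    (A + B).det = ∑ ε : ι → Bool, (of fun i => if ε i then A i else B i).det := by
  have hrows : A + B = fun i => ∑ b : Bool, if b then A i else B i := by
    ext i j; simp
  rw [hrows]
  exact (detRowAlternating (R := R) (n := ι)).toMultilinearMap.map_sum (α := fun _ => Bool)
    fun i b => if b then A i else B i

theorem Real.rpow_half_add_mul_rpow_sub_half {x : ℝ} (hx : 0 < x) (k : ℤ) :
    (x ^ (1 / 2 : ℝ) + x ^ (-(1 / 2) : ℝ)) * (x ^ ((k : ℝ) - 1 / 2) - x ^ (-((k : ℝ) - 1 / 2)))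
      = (x ^ (k - 1) - x ^ (-(k - 1))) + (x ^ k - x ^ (-k)) := by
  have hmul : ∀ a b : ℝ, x ^ a * x ^ b = x ^ (a + b) := fun a b => (Real.rpow_add hx a b).symm
  simp only [← Real.rpow_intCast, add_mul, mul_sub, hmul]
  push_cast
  ring_nf

noncomputable def altPowMatrix {ι : Type*} (e : ι → ℤ) (x : ι → ℝ) : Matrix ι ι ℝ :=
  of fun i j => x j ^ e i - x j ^ (-e i)

section altPowMatrix

variable {ι : Type*} [Fintype ι] [DecidableEq ι] {e : ι → ℤ} {x : ι → ℝ}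

theorem det_altPowMatrix_eq_zero_of_not_injective (he : ¬ Function.Injective e) :
    (altPowMatrix e x).det = 0 := by
  obtain ⟨i, j, hij, hne⟩ := Function.not_injective_iff.mp he
  exact det_zero_of_row_eq hne (by ext k; simp [altPowMatrix, hij])

theorem det_altPowMatrix_eq_zero_of_eq_zero {i : ι} (hi : e i = 0) :
    (altPowMatrix e x).det = 0 :=
  det_eq_zero_of_row_eq_zero i fun j => by simp [altPowMatrix, hi]

theorem prod_mul_det_rpow_sub_half (hx : ∀ j, 0 < x j) (e : ι → ℤ) :
    (∏ j, (x j ^ (1 / 2 : ℝ) + x j ^ (-(1 / 2) : ℝ))) *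
        (of fun i j => x j ^ ((e i : ℝ) - 1 / 2) - x j ^ (-((e i : ℝ) - 1 / 2))).det
      = ∑ ε : ι → Bool, (altPowMatrix (fun i => e i - if ε i then 1 else 0) x).det := by
  calc _ = (altPowMatrix (fun i => e i - 1) x + altPowMatrix e x).det := by
        rw [← det_mul_row]
        congr 1
        ext i j
        exact Real.rpow_half_add_mul_rpow_sub_half (hx j) (e i)
    _ = _ := by
        rw [det_add_eq_sum_bool]
        refine Finset.sum_congr rfl fun ε _ => congrArg det ?_
        ext i j
        by_cases h : ε i <;> simp [altPowMatrix, h]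

end altPowMatrix

/-- The exponents `e i = λ i - t i + n - i` always weakly decrease, by steps of at least `1` exactly
where `λ - t` does not increase; so injectivity of `e` makes `λ - t` antitone, and then a negative
entry would force `e (n - 1) = 0`. -/
theorem antitone_and_nonneg_of_injective {n : ℕ} {lam : Fin n → ℕ} (hlam : Antitone lam)
    {t : Fin n → ℤ} (ht0 : 0 ≤ t) (ht1 : t ≤ 1)
    (hinj : Function.Injective fun i : Fin n => (lam i : ℤ) + n - (i : ℕ) - t i)
    (hne : ∀ i : Fin n, (lam i : ℤ) + n - (i : ℕ) - t i ≠ 0) :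
    Antitone (fun i => (lam i : ℤ) - t i) ∧ 0 ≤ fun i => (lam i : ℤ) - t i := by
  have ht : ∀ i, 0 ≤ t i ∧ t i ≤ 1 := fun i => ⟨ht0 i, ht1 i⟩
  have hanti : Antitone (fun i => (lam i : ℤ) - t i) := by
    cases n with
    | zero => exact fun i => i.elim0
    | succ m =>
      refine Fin.antitone_iff_succ_le.mpr fun i => ?_
      have hlam_i : lam i.succ ≤ lam i.castSucc := hlam (Fin.castSucc_le_succ i)
      have hne_i := hinj.ne (Fin.castSucc_lt_succ (i := i)).ne
      simp only [Fin.val_castSucc, Fin.val_succ] at hne_i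
      have := ht i.succ
      have := ht i.castSucc
      push_cast at hne_i
      omega
  refine ⟨hanti, fun i => ?_⟩
  have hn : 0 < n := i.pos
  have hlast := hanti (show i ≤ ⟨n - 1, by omega⟩ from Fin.le_def.mpr (by simp only; omega))
  have hne_last := hne ⟨n - 1, by omega⟩
  have := (ht ⟨n - 1, by omega⟩).2
  simp only [Nat.cast_sub hn, Pi.zero_apply] at hlast hne_last ⊢
  push_cast at hne_last
  omega

noncomputable def spNumer (n : ℕ) (μ : Fin n → ℤ) (x : Fin n → ℝ) : ℝ :=
  if Antitone μ ∧ 0 ≤ μ then (altPowMatrix (fun i => μ i + n - (i : ℕ)) x).det else 0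

theorem spCharZ_eq_div (n : ℕ) (μ : Fin n → ℤ) (x : Fin n → ℝ) :
    spCharZ n μ x = spNumer n μ x / spNumer n 0 x := by
  have hzero : spNumer n 0 x = (altPowMatrix (fun i : Fin n => (n : ℤ) - (i : ℕ)) x).det := by
    rw [spNumer, if_pos ⟨antitone_const, le_rfl⟩]
    simp
  rw [hzero, spNumer, spCharZ]
  by_cases h : Antitone μ ∧ 0 ≤ μ
  · rw [if_pos h]
    exact if_pos h
  · rw [if_neg h, zero_div]
    exact if_neg h

noncomputable def soNumer (n : ℕ) (lam : Fin n → ℕ) (x : Fin n → ℝ) : ℝ :=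
  (of fun i j : Fin n =>
      x j ^ ((lam i : ℝ) + n - (i : ℕ) - 1 / 2)
        - x j ^ (-((lam i : ℝ) + n - (i : ℕ) - 1 / 2))).det

theorem soOdd_eq_div (n : ℕ) (lam : Fin n → ℕ) (x : Fin n → ℝ) :
    soOdd n lam x = soNumer n lam x / soNumer n 0 x := by
  simp [soOdd, soNumer]

theorem det_altPowMatrix_sub_eq_spNumer {n : ℕ} {lam : Fin n → ℕ} (hlam : Antitone lam)
    {t : Fin n → ℤ} (ht0 : 0 ≤ t) (ht1 : t ≤ 1) (x : Fin n → ℝ) :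
    (altPowMatrix (fun i => (lam i : ℤ) + n - (i : ℕ) - t i) x).det
      = spNumer n (fun i => (lam i : ℤ) - t i) x := by
  rw [spNumer]
  split_ifs with hpart
  · congr 2
    funext i
    ring
  · by_contra hdet
    refine hpart (antitone_and_nonneg_of_injective hlam ht0 ht1 ?_ fun i hi => ?_)
    · by_contra hinj
      exact hdet (det_altPowMatrix_eq_zero_of_not_injective hinj)
    · exact hdet (det_altPowMatrix_eq_zero_of_eq_zero hi)

theorem prod_mul_soNumer {n : ℕ} {lam : Fin n → ℕ} (hlam : Antitone lam) {x : Fin n → ℝ}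
    (hx : ∀ j, 0 < x j) :
    (∏ j, (x j ^ (1 / 2 : ℝ) + x j ^ (-(1 / 2) : ℝ))) * soNumer n lam x
      = ∑ ε : Fin n → Bool, spNumer n (fun i => (lam i : ℤ) - if ε i then 1 else 0) x := by
  have hexp : ∀ i : Fin n, (lam i : ℝ) + n - (i : ℕ) - 1 / 2
      = (((lam i : ℤ) + n - (i : ℕ) : ℤ) : ℝ) - 1 / 2 := fun i => by push_cast; ring
  simp only [soNumer, hexp]
  rw [prod_mul_det_rpow_sub_half hx]
  refine Finset.sum_congr rfl fun ε _ => ?_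
  refine det_altPowMatrix_sub_eq_spNumer hlam (fun i => ?_) (fun i => ?_) x <;>
    by_cases h : ε i <;> simp [h]

theorem prod_mul_soNumer_zero {n : ℕ} {x : Fin n → ℝ} (hx : ∀ j, 0 < x j) :
    (∏ j, (x j ^ (1 / 2 : ℝ) + x j ^ (-(1 / 2) : ℝ))) * soNumer n 0 x = spNumer n 0 x := by
  rw [prod_mul_soNumer (lam := 0) antitone_const hx, Finset.sum_eq_single (fun _ => false)]
  · simp only [Pi.zero_apply, Nat.cast_zero, Bool.false_eq_true, if_false, sub_zero]
    rfl
  · intro ε _ hε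
    obtain ⟨i, hi⟩ := Function.ne_iff.mp hε
    simp only [ne_eq, Bool.not_eq_false] at hi
    rw [spNumer, if_neg fun h => by simpa [hi] using h.2 i]
  · simp

theorem soOdd_eq_sum_spCharZ {n : ℕ} {lam : Fin n → ℕ} (hlam : Antitone lam) {x : Fin n → ℝ}
    (hx : ∀ j, 0 < x j) :
    soOdd n lam x
      = ∑ ε : Fin n → Bool, spCharZ n (fun i => (lam i : ℤ) - if ε i then 1 else 0) x := by
  have hc : (∏ j, (x j ^ (1 / 2 : ℝ) + x j ^ (-(1 / 2) : ℝ))) ≠ 0 :=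
    (Finset.prod_pos fun j _ => by have := hx j; positivity).ne'
  simp only [soOdd_eq_div, spCharZ_eq_div, ← Finset.sum_div]
  rw [← mul_div_mul_left _ _ hc, prod_mul_soNumer hlam hx, prod_mul_soNumer_zero hx]

theorem cbPoly_zero (n : ℕ) (lam : Fin n → ℕ) (x : Fin n → ℝ) :
    cbPoly n lam x 0 = spCharZ n (fun i => (lam i : ℤ)) x := by
  rw [cbPoly, Finset.sum_eq_single (fun _ => false)]
  · simp
  · intro ε _ hε
    obtain ⟨i, hi⟩ := Function.ne_iff.mp hε
    simp only [ne_eq, Bool.not_eq_false] at hi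
    rw [zero_pow (Finset.card_ne_zero.mpr ⟨i, by simp [hi]⟩), zero_mul]
  · simp

theorem cbPoly_one (n : ℕ) (lam : Fin n → ℕ) (x : Fin n → ℝ) :
    cbPoly n lam x 1
      = ∑ ε : Fin n → Bool, spCharZ n (fun i => (lam i : ℤ) - if ε i then 1 else 0) x := by
  simp [cbPoly]

/-- the CB-interpolating polynomial specializes at `β = 0` to the
symplectic character, at `β = 1` to the odd orthogonal character; in particular
`so^{(2n+1)}_λ(x) = Σ_{ε ∈ {0,1}^n} sp^{(2n)}_{λ-ε}(x)` (Proctor–Sundaram). -/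
theorem cbPoly_specializations (n : ℕ) (lam : Fin n → ℕ) (hlam : Antitone lam)
    (x : Fin n → ℝ) (hx : ∀ i, 0 < x i) :
    cbPoly n lam x 0 = spCharZ n (fun i => (lam i : ℤ)) x ∧
    cbPoly n lam x 1 = soOdd n lam x ∧
    soOdd n lam x
      = ∑ ε : Fin n → Bool,
          spCharZ n (fun i => (lam i : ℤ) - if ε i then 1 else 0) x := by
  have hso := soOdd_eq_sum_spCharZ hlam hx
  exact ⟨cbPoly_zero n lam x, (cbPoly_one n lam x).trans hso.symm, hso⟩
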